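/- arXiv:1310.1208 — 4 statements merged into one kernel-verified Lean document; each statement's English description precedes it below -/
import Mathlib

section
/- Let Ω ⊂ ℝⁿ be a bounded open set, ψ: closure(Ω) → ℝⁿ Lipschitz, and let T > 0 be such that φ_t = id + tψ is bi-Lipschitz from closure(Ω) onto its image for all t ∈ (−T, T). Fix t₀ ∈ (−T, T). Then there exist constants c, s₀ > 0 such that for all x ∈ Ω and all s ∈ (−s₀, s₀): c⁻¹ · d_{φ_{t₀}(Ω)}(φ_{t₀}(x)) ≤ d_{φ_{t₀+s}(Ω)}(φ_{t₀+s}(x)) ≤ c · d_{φ_{t₀}(Ω)}(φ_{t₀}(x)). -/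
/-!
Let `g` be the Lipschitz left inverse of `φ_{t₀}` on `closure Ω` and extend `ψ ∘ g` from
`φ_{t₀}(closure Ω)` to a globally Lipschitz map `Θ`. Then `φ_{t₀+s} = H_s ∘ φ_{t₀}` on
`closure Ω`, where `H_s = id + s • Θ`. For small `|s|` the map `H_s` perturbs the identity by a
contraction, so it is a homeomorphism of the whole space, `2`-bi-Lipschitz. Homeomorphisms map
frontiers to frontiers, hence `d_{φ_{t₀+s}(Ω)}(φ_{t₀+s}(x))` is the distance from
`H_s(φ_{t₀}(x))` to `H_s(∂φ_{t₀}(Ω))`, which is within a factor `2` of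
`d_{φ_{t₀}(Ω)}(φ_{t₀}(x))`.
-/

open Metric Set
open scoped NNReal

theorem LipschitzWith.infDist_image_le {X Y : Type*} [PseudoMetricSpace X] [PseudoMetricSpace Y]
    {f : X → Y} {K : ℝ≥0} (hf : LipschitzWith K f) (x : X) (s : Set X) :
    infDist (f x) (f '' s) ≤ K * infDist x s := by
  rcases s.eq_empty_or_nonempty with rfl | hs
  · simp
  have hlt : ∀ r ∈ Ioi (infDist x s), infDist (f x) (f '' s) ≤ K * r := by
    intro r hr
    obtain ⟨y, hy, hxy⟩ := (infDist_lt_iff hs).1 hr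
    calc infDist (f x) (f '' s) ≤ dist (f x) (f y) := infDist_le_dist_of_mem (mem_image_of_mem f hy)
      _ ≤ K * dist x y := hf.dist_le_mul x y
      _ ≤ K * r := by gcongr
  refine ge_of_tendsto ?_ (eventually_nhdsWithin_of_forall (a := infDist x s) hlt)
  exact ((continuous_const.mul continuous_id).tendsto _).mono_left nhdsWithin_le_nhds

theorem Homeomorph.infDist_frontier_image_le {X Y : Type*} [PseudoMetricSpace X]
    [PseudoMetricSpace Y] (H : X ≃ₜ Y) {K : ℝ≥0} (hH : LipschitzWith K H) (x : X) (A : Set X) :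
    infDist (H x) (frontier (H '' A)) ≤ K * infDist x (frontier A) := by
  rw [← H.image_frontier]
  exact hH.infDist_image_le x _

theorem Homeomorph.infDist_frontier_le_image {X Y : Type*} [PseudoMetricSpace X]
    [PseudoMetricSpace Y] (H : X ≃ₜ Y) {K : ℝ≥0} (hH : LipschitzWith K H.symm) (x : X)
    (A : Set X) :
    infDist x (frontier A) ≤ K * infDist (H x) (frontier (H '' A)) := by
  have := H.symm.infDist_frontier_image_le hH (H x) (H '' A)
  rwa [H.symm_apply_apply, H.image_symm, H.preimage_image] at this

section PerturbationOfIdentity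

variable {E : Type*} [NormedAddCommGroup E] [NormedSpace ℝ E] [CompleteSpace E]

theorem LipschitzWith.exists_homeomorph_add {h : E → E} {c : ℝ≥0} (hh : LipschitzWith c h)
    (hc : c < 1) :
    ∃ H : E ≃ₜ E, ⇑H = (fun x => x + h x) ∧ LipschitzWith (1 + c) H ∧
      LipschitzWith (1 - c)⁻¹ H.symm := by
  have happrox : ApproximatesLinearOn (fun x => x + h x)
      (ContinuousLinearEquiv.refl ℝ E : E →L[ℝ] E) univ c := by
    rw [ApproximatesLinearOn.approximatesLinearOn_iff_lipschitzOnWith]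
    convert hh.lipschitzOnWith (s := univ)
    ext x
    simp
  have hc' : Subsingleton E ∨ c < ‖((ContinuousLinearEquiv.refl ℝ E).symm : E →L[ℝ] E)‖₊⁻¹ := by
    rcases subsingleton_or_nontrivial E with hE | hE
    · exact .inl hE
    · right
      simpa using hc
  let H := happrox.toHomeomorph _ hc'
  have hanti : AntilipschitzWith (1 - c)⁻¹ H := by
    have := AntilipschitzWith.id.add_lipschitzWith hh (by simpa using hc)
    rwa [inv_one] at this
  exact ⟨H, rfl, LipschitzWith.id.add hh, hanti.to_rightInverse H.right_inv⟩

theorem LipschitzWith.exists_homeomorph_add_smul {Θ : E → E} {C : ℝ≥0} (hΘ : LipschitzWith C Θ) :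
    ∃ s₀ > (0 : ℝ), ∀ s : ℝ, |s| < s₀ → ∃ H : E ≃ₜ E, ⇑H = (fun x => x + s • Θ x) ∧
      LipschitzWith 2 H ∧ LipschitzWith 2 H.symm := by
  refine ⟨(2 * (C + 1))⁻¹, by positivity, fun s hs => ?_⟩
  have hsC : ‖s‖₊ * C ≤ 1 / 2 := by
    rw [← NNReal.coe_le_coe, NNReal.coe_mul, coe_nnnorm, Real.norm_eq_abs]
    calc |s| * C ≤ (2 * ((C : ℝ) + 1))⁻¹ * (C + 1) := by gcongr; linarith
      _ = 1 / 2 := by field_simp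
  obtain ⟨H, hH, hHlip, hHsymm⟩ :=
    ((lipschitzWith_smul s).comp hΘ).exists_homeomorph_add (hsC.trans_lt (by norm_num))
  have hlip : 1 + ‖s‖₊ * C ≤ 2 := by
    calc 1 + ‖s‖₊ * C ≤ 1 + 1 := by gcongr; exact hsC.trans (by norm_num)
      _ = 2 := one_add_one_eq_two
  have hlip_symm : (1 - ‖s‖₊ * C)⁻¹ ≤ 2 := by
    refine inv_le_of_inv_le₀ two_pos (le_tsub_of_add_le_left ?_)
    calc ‖s‖₊ * C + 2⁻¹ ≤ 1 / 2 + 2⁻¹ := by gcongr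
      _ = 1 := by norm_num
  exact ⟨H, hH, hHlip.weaken hlip, hHsymm.weaken hlip_symm⟩

end PerturbationOfIdentity

theorem stmt12_general {n : ℕ} (Ω : Set (EuclideanSpace ℝ (Fin n)))
    (ψ : EuclideanSpace ℝ (Fin n) → EuclideanSpace ℝ (Fin n)) (K : NNReal)
    (hψ : LipschitzOnWith K ψ (closure Ω)) (T : ℝ)
    (hbil : ∀ t : ℝ, |t| < T →
      ∃ (K₂ : NNReal) (g : EuclideanSpace ℝ (Fin n) → EuclideanSpace ℝ (Fin n)),
        LipschitzOnWith K₂ g ((fun x => x + t • ψ x) '' closure Ω) ∧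
        Set.LeftInvOn g (fun x => x + t • ψ x) (closure Ω))
    (t₀ : ℝ) (ht₀ : |t₀| < T) :
    ∃ c > (0 : ℝ), ∃ s₀ > (0 : ℝ), ∀ x ∈ Ω, ∀ s : ℝ, |s| < s₀ →
      c⁻¹ * Metric.infDist (x + t₀ • ψ x) (frontier ((fun z => z + t₀ • ψ z) '' Ω)) ≤
          Metric.infDist (x + (t₀ + s) • ψ x) (frontier ((fun z => z + (t₀ + s) • ψ z) '' Ω)) ∧
        Metric.infDist (x + (t₀ + s) • ψ x) (frontier ((fun z => z + (t₀ + s) • ψ z) '' Ω)) ≤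
          c * Metric.infDist (x + t₀ • ψ x) (frontier ((fun z => z + t₀ • ψ z) '' Ω)) := by
  obtain ⟨K₂, g, hg, hgφ⟩ := hbil t₀ ht₀
  obtain ⟨Θ, hΘ, hΘψ⟩ :=
    (hψ.comp hg (hgφ.mapsTo (surjOn_image _ _))).extend_finite_dimension
  obtain ⟨s₀, hs₀, hperturb⟩ := hΘ.exists_homeomorph_add_smul
  refine ⟨2, two_pos, s₀, hs₀, fun x hx s hs => ?_⟩
  obtain ⟨H, hH, hHlip, hHsymm⟩ := hperturb s hs
  have hHφ : ∀ z ∈ closure Ω, H (z + t₀ • ψ z) = z + (t₀ + s) • ψ z := by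
    intro z hz
    simp only [hH]
    rw [← hΘψ (mem_image_of_mem _ hz), Function.comp_apply, hgφ hz, add_smul, add_assoc]
  have himage : (fun z => z + (t₀ + s) • ψ z) '' Ω = H '' ((fun z => z + t₀ • ψ z) '' Ω) := by
    rw [image_image]
    exact image_congr fun z hz => (hHφ z (subset_closure hz)).symm
  rw [← hHφ x (subset_closure hx), himage]
  constructor
  · exact inv_mul_le_of_le_mul₀ zero_le_two infDist_nonneg
      (by exact_mod_cast H.infDist_frontier_le_image hHsymm _ _)
  · exact_mod_cast H.infDist_frontier_image_le hHlip _ _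

/-- cf. (3.9): With `φ_t = id + t ψ` bi-Lipschitz on `closure Ω` for `|t| < T`
and `t₀` fixed, there are `c, s₀ > 0` such that for all `x ∈ Ω` and `|s| < s₀`:
`c⁻¹ d_{φ_{t₀}(Ω)}(φ_{t₀}(x)) ≤ d_{φ_{t₀+s}(Ω)}(φ_{t₀+s}(x)) ≤ c d_{φ_{t₀}(Ω)}(φ_{t₀}(x))`. -/
theorem stmt12 {n : ℕ} (Ω : Set (EuclideanSpace ℝ (Fin n)))
    (hΩo : IsOpen Ω) (hΩb : Bornology.IsBounded Ω)
    (ψ : EuclideanSpace ℝ (Fin n) → EuclideanSpace ℝ (Fin n)) (K : NNReal)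
    (hψ : LipschitzOnWith K ψ (closure Ω)) (T : ℝ) (hT : 0 < T)
    (hbil : ∀ t : ℝ, |t| < T →
      ∃ (K₂ : NNReal) (g : EuclideanSpace ℝ (Fin n) → EuclideanSpace ℝ (Fin n)),
        LipschitzOnWith K₂ g ((fun x => x + t • ψ x) '' closure Ω) ∧
        Set.LeftInvOn g (fun x => x + t • ψ x) (closure Ω))
    (t₀ : ℝ) (ht₀ : |t₀| < T) :
    ∃ c > (0 : ℝ), ∃ s₀ > (0 : ℝ), ∀ x ∈ Ω, ∀ s : ℝ, |s| < s₀ →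
      c⁻¹ * Metric.infDist (x + t₀ • ψ x) (frontier ((fun z => z + t₀ • ψ z) '' Ω)) ≤
          Metric.infDist (x + (t₀ + s) • ψ x) (frontier ((fun z => z + (t₀ + s) • ψ z) '' Ω)) ∧
        Metric.infDist (x + (t₀ + s) • ψ x) (frontier ((fun z => z + (t₀ + s) • ψ z) '' Ω)) ≤
          c * Metric.infDist (x + t₀ • ψ x) (frontier ((fun z => z + t₀ • ψ z) '' Ω)) :=
  stmt12_general Ω ψ K hψ T hbil t₀ ht₀
end

section
/- Let Ω ⊂ ℝⁿ be a bounded open set, ψ: closure(Ω) → ℝⁿ Lipschitz, p ∈ [1, ∞), and φ_t = id + tψ bi-Lipschitz for |t| < T. Fix t₀ with |t₀| < T. Then there exist c, s₀ > 0 such that for all x ∈ Ω and s ∈ (−s₀, s₀): |d_{φ_{t₀+s}(Ω)}(φ_{t₀+s}(x))^p − d_{φ_{t₀}(Ω)}(φ_{t₀}(x))^p| ≤ c · d_{φ_{t₀}(Ω)}(φ_{t₀}(x))^p · |s|. -/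
/-!
Write `φ_t = id + t ψ`, `d_t = d_{φ_t(Ω)}(φ_t x)`, and let `g` be an `L`-Lipschitz left inverse
of `φ_t`. On `φ_t(Ω)` the map `φ_{t+s} ∘ g = id + s (ψ ∘ g)` is a perturbation of the identity
with Lipschitz constant `|s| K L`, so by the surjectivity part of the inverse function theorem it
maps every ball `B(φ_t x, ε) ⊆ φ_t(Ω)` onto a set containing `B(φ_{t+s} x, (1 - |s| K L) ε)`;
hence `d_{t+s} ≥ (1 - |s| K L) d_t`. Since
`|z - z'| ≤ L (|φ_{t+s} z - φ_{t+s} z'| + |s| K |z - z'|)`, `φ_{t+s}` has a left inverse with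
Lipschitz constant `L / (1 - |s| K L)`, and the same argument run backwards gives
`|d_{t+s} - d_t| ≤ 2 |s| K L d_t`. Bernoulli's inequality and the convexity of `x ↦ x ^ p` turn
this into the estimate for `p`-th powers.
-/

open Metric Set
open scoped NNReal

theorem LipschitzOnWith.isBounded_image {α β : Type*} [PseudoMetricSpace α] [PseudoMetricSpace β]
    {f : α → β} {K : ℝ≥0} {s : Set α} (hf : LipschitzOnWith K f s) (hs : Bornology.IsBounded s) :
    Bornology.IsBounded (f '' s) := by
  obtain ⟨C, hC⟩ := isBounded_iff.1 hs
  refine isBounded_image_iff.2 ⟨K * C, fun x hx y hy => ?_⟩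
  exact (hf.dist_le_mul x hx y hy).trans (by gcongr; exact hC hx hy)

theorem Metric.le_infDist_compl_of_closedBall_subset {α : Type*} [PseudoMetricSpace α]
    {x : α} {r : ℝ} {A : Set α} (hA : Aᶜ.Nonempty) (h : closedBall x r ⊆ A) :
    r ≤ infDist x Aᶜ :=
  (le_infDist hA).2 fun _ hy => le_of_not_gt fun hlt => hy (h (mem_closedBall'.2 hlt.le))

theorem Metric.infDist_frontier_eq_infDist_compl {E : Type*} [NormedAddCommGroup E]
    [NormedSpace ℝ E] [FiniteDimensional ℝ E] {x : E} {s : Set E} (hx : x ∈ s) :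
    infDist x (frontier s) = infDist x sᶜ := by
  rcases eq_or_ne s univ with rfl | hs
  · simp
  obtain ⟨y, hy, hxy⟩ := exists_mem_frontier_infDist_compl_eq_dist hx hs
  refine le_antisymm (hxy ▸ infDist_le_dist_of_mem hy) ?_
  rw [← infDist_closure]
  exact infDist_le_infDist_of_subset
    (frontier_eq_closure_inter_closure (s := s) ▸ inter_subset_right) ⟨y, hy⟩

theorem Real.one_add_rpow_le {a p : ℝ} (ha₀ : 0 ≤ a) (ha₁ : a ≤ 1) (hp : 1 ≤ p) :
    (1 + a) ^ p ≤ 1 + (2 ^ p - 1) * a := by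
  have := (convexOn_rpow hp).2 (x := 1) (y := 2) (by norm_num) (by norm_num)
    (sub_nonneg.2 ha₁) ha₀ (by ring)
  simp only [smul_eq_mul, Real.one_rpow] at this
  calc (1 + a) ^ p = ((1 - a) * 1 + a * 2) ^ p := by ring_nf
    _ ≤ (1 - a) * 1 + a * 2 ^ p := this
    _ = 1 + (2 ^ p - 1) * a := by ring

theorem Real.abs_rpow_sub_rpow_le_of_abs_sub_le {d d' a p : ℝ} (hd : 0 ≤ d) (ha₀ : 0 ≤ a)
    (ha₁ : a ≤ 1) (hp : 1 ≤ p) (h : |d' - d| ≤ a * d) :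
    |d' ^ p - d ^ p| ≤ (2 ^ p + p) * a * d ^ p := by
  obtain ⟨hlow, hup⟩ := abs_sub_le_iff.1 h
  have hdp : 0 ≤ d ^ p := Real.rpow_nonneg hd p
  have h2p : 1 ≤ (2 : ℝ) ^ p := Real.one_le_rpow (by norm_num) (by linarith)
  have hup' : d' ^ p ≤ (1 + (2 ^ p - 1) * a) * d ^ p := calc
    d' ^ p ≤ ((1 + a) * d) ^ p := Real.rpow_le_rpow (by nlinarith) (by linarith) (by linarith)
    _ = (1 + a) ^ p * d ^ p := Real.mul_rpow (by linarith) hd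
    _ ≤ (1 + (2 ^ p - 1) * a) * d ^ p := by gcongr; exact Real.one_add_rpow_le ha₀ ha₁ hp
  have hlow' : (1 + p * -a) * d ^ p ≤ d' ^ p := calc
    (1 + p * -a) * d ^ p ≤ (1 + -a) ^ p * d ^ p := by
      gcongr; exact one_add_mul_self_le_rpow_one_add (by linarith) hp
    _ = ((1 - a) * d) ^ p := by rw [← sub_eq_add_neg, Real.mul_rpow (by linarith) hd]
    _ ≤ d' ^ p := Real.rpow_le_rpow (by nlinarith) (by linarith) (by linarith)
  rw [abs_sub_le_iff]
  constructor <;> nlinarith [mul_nonneg ha₀ hdp]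

section Perturbation

variable {E : Type*} [NormedAddCommGroup E] {s : Set E} {F G g : E → E} {K L : ℝ≥0}

theorem mul_infDist_compl_image_le_of_leftInvOn [NormedSpace ℝ E] [CompleteSpace E]
    (hg : LeftInvOn g F s) (hgL : LipschitzOnWith L g (F '' s))
    (hGF : LipschitzOnWith K (fun z => G z - F z) s) (hKL : K * L < 1)
    (hG : (G '' s)ᶜ.Nonempty) {x : E} (hx : x ∈ s) :
    (1 - K * L) * infDist (F x) (F '' s)ᶜ ≤ infDist (G x) (G '' s)ᶜ := by
  have hFg : ∀ v ∈ F '' s, F (g v) = v := by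
    rintro _ ⟨z, hz, rfl⟩
    rw [hg hz]
  have hgs : MapsTo g (F '' s) s := by
    rintro _ ⟨z, hz, rfl⟩
    rwa [hg hz]
  -- In the coordinates `v = F z`, the map `G` reads `v ↦ v + (G - F) (g v)`.
  have happrox : ApproximatesLinearOn (G ∘ g) (ContinuousLinearMap.id ℝ E) (F '' s) (K * L) := by
    intro v hv w hw
    have hsplit : G (g v) - G (g w) - (v - w) = (G (g v) - F (g v)) - (G (g w) - F (g w)) := by
      rw [hFg v hv, hFg w hw]; abel
    simpa only [Function.comp_apply, ContinuousLinearMap.id_apply, hsplit, ← dist_eq_norm]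
      using (hGF.comp hgL hgs).dist_le_mul v hv w hw
  let idInv : (ContinuousLinearMap.id ℝ E).NonlinearRightInverse :=
    ⟨id, 1, by simp, fun _ => rfl⟩
  have hball : ∀ ε, 0 ≤ ε → ε < infDist (F x) (F '' s)ᶜ →
      (1 - K * L) * ε ≤ infDist (G x) (G '' s)ᶜ := by
    intro ε hε₀ hε
    have hεs : closedBall (F x) ε ⊆ F '' s :=
      (closedBall_subset_ball hε).trans ball_infDist_compl_subset
    refine le_infDist_compl_of_closedBall_subset hG fun y hy => ?_
    have hy' : y ∈ closedBall ((G ∘ g) (F x)) (((idInv.nnnorm : ℝ)⁻¹ - (K * L : ℝ≥0)) * ε) := by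
      simpa [idInv, hg hx] using hy
    obtain ⟨v, hv, rfl⟩ := happrox.surjOn_closedBall_of_nonlinearRightInverse idInv hε₀ hεs hy'
    exact mem_image_of_mem G (hgs (hεs hv))
  have hKL' : (0 : ℝ) < 1 - K * L := sub_pos.2 (by exact_mod_cast hKL)
  rw [← le_div_iff₀' hKL']
  refine le_of_forall_lt_imp_le_of_dense fun ε hε => ?_
  rcases lt_or_ge ε 0 with hε₀ | hε₀
  · exact hε₀.le.trans (div_nonneg infDist_nonneg hKL'.le)
  · exact (le_div_iff₀' hKL').2 (hball ε hε₀ hε)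

theorem exists_leftInvOn_lipschitzOnWith_of_leftInvOn (hg : LeftInvOn g F s)
    (hgL : LipschitzOnWith L g (F '' s)) (hGF : LipschitzOnWith K (fun z => G z - F z) s)
    (hKL : K * L < 1) :
    ∃ g' : E → E, LeftInvOn g' G s ∧ LipschitzOnWith (L / (1 - K * L)) g' (G '' s) := by
  have hKL' : (0 : ℝ) < 1 - K * L := sub_pos.2 (by exact_mod_cast hKL)
  have hdist : ∀ z ∈ s, ∀ z' ∈ s, (1 - K * L) * dist z z' ≤ L * dist (G z) (G z') := by
    intro z hz z' hz'
    have hF : dist (F z) (F z') ≤ dist (G z) (G z') + K * dist z z' := calc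
      dist (F z) (F z') ≤ dist (G z) (G z') + dist (G z - F z) (G z' - F z') := by
        rw [dist_eq_norm, dist_eq_norm, dist_eq_norm]
        refine le_of_eq_of_le ?_ (norm_sub_le (G z - G z') (G z - F z - (G z' - F z')))
        congr 1; abel
      _ ≤ dist (G z) (G z') + K * dist z z' := by gcongr; exact hGF.dist_le_mul z hz z' hz'
    have hz : dist z z' ≤ L * dist (F z) (F z') := by
      simpa only [hg hz, hg hz'] using
        hgL.dist_le_mul (F z) (mem_image_of_mem F hz) (F z') (mem_image_of_mem F hz')
    nlinarith [mul_le_mul_of_nonneg_left hF L.coe_nonneg]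
  have hinj : InjOn G s := fun z hz z' hz' h => by
    have := hdist z hz z' hz'
    rw [h, dist_self, mul_zero] at this
    exact dist_le_zero.1 (nonpos_of_mul_nonpos_right this hKL')
  refine ⟨Function.invFunOn G s, hinj.leftInvOn_invFunOn, LipschitzOnWith.of_dist_le_mul ?_⟩
  rintro _ ⟨z, hz, rfl⟩ _ ⟨z', hz', rfl⟩
  rw [hinj.leftInvOn_invFunOn hz, hinj.leftInvOn_invFunOn hz', NNReal.coe_div,
    NNReal.coe_sub hKL.le, div_mul_eq_mul_div, le_div_iff₀' (by exact_mod_cast hKL')]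
  exact_mod_cast hdist z hz z' hz'

theorem abs_infDist_compl_image_sub_le [NormedSpace ℝ E] [CompleteSpace E]
    (hg : LeftInvOn g F s) (hgL : LipschitzOnWith L g (F '' s))
    (hGF : LipschitzOnWith K (fun z => G z - F z) s) (hKL : 4 * (K * L) ≤ 1)
    (hF : (F '' s)ᶜ.Nonempty) (hG : (G '' s)ᶜ.Nonempty) {x : E} (hx : x ∈ s) :
    |infDist (G x) (G '' s)ᶜ - infDist (F x) (F '' s)ᶜ| ≤
      2 * (K * L) * infDist (F x) (F '' s)ᶜ := by
  have ha : 4 * ((K : ℝ) * L) ≤ 1 := by exact_mod_cast hKL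
  have hKL₁ : K * L < 1 := by
    rw [← NNReal.coe_lt_coe]; push_cast; linarith
  have hlow := mul_infDist_compl_image_le_of_leftInvOn hg hgL hGF hKL₁ hG hx
  obtain ⟨g', hg', hg'L⟩ := exists_leftInvOn_lipschitzOnWith_of_leftInvOn hg hgL hGF hKL₁
  have hFG : LipschitzOnWith K (fun z => F z - G z) s := by
    simpa only [Pi.neg_def, neg_sub] using
      (lipschitzOnWith_neg_iff (f := fun z => G z - F z)).2 hGF
  have hcoe : ((K * (L / (1 - K * L)) : ℝ≥0) : ℝ) = K * L / (1 - K * L) := by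
    rw [NNReal.coe_mul, NNReal.coe_div, NNReal.coe_sub hKL₁.le, mul_div_assoc']; push_cast; rfl
  have hKL' : K * (L / (1 - K * L)) < 1 := by
    rw [← NNReal.coe_lt_coe, hcoe, NNReal.coe_one, div_lt_one (by linarith)]; linarith
  have hup := mul_infDist_compl_image_le_of_leftInvOn hg' hg'L hFG hKL' hF hx
  rw [← NNReal.coe_mul, hcoe] at hup
  set a : ℝ := K * L
  set δF := infDist (F x) (F '' s)ᶜ
  set δG := infDist (G x) (G '' s)ᶜ
  have haδ : 0 ≤ a * δF := mul_nonneg (mul_nonneg K.coe_nonneg L.coe_nonneg) infDist_nonneg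
  have hup' : (1 - 2 * a) * δG ≤ (1 - a) * δF := by
    have h1a : 0 < 1 - a := by linarith
    rw [show 1 - a / (1 - a) = (1 - 2 * a) / (1 - a) by field_simp; ring, div_mul_eq_mul_div,
      div_le_iff₀ h1a] at hup
    linarith
  rw [abs_sub_le_iff]
  constructor
  · nlinarith [mul_nonneg (by linarith : (0 : ℝ) ≤ 1 - 4 * a) haδ]
  · nlinarith

end Perturbation

section AddSmul

variable {E : Type*} [NormedAddCommGroup E] [NormedSpace ℝ E] {Ω : Set E} {ψ : E → E}
  {K : ℝ≥0}

theorem nonempty_compl_image_add_smul [Nontrivial E] (hψ : LipschitzOnWith K ψ Ω)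
    (hΩ : Bornology.IsBounded Ω) (t : ℝ) : ((fun z => z + t • ψ z) '' Ω)ᶜ.Nonempty :=
  nonempty_compl.2 fun h => NormedSpace.unbounded_univ ℝ E <| h ▸
    (LipschitzWith.id.lipschitzOnWith.add
      ((lipschitzWith_smul t).comp_lipschitzOnWith hψ)).isBounded_image hΩ

theorem abs_infDist_compl_image_add_smul_sub_le [CompleteSpace E] {t s : ℝ} {g : E → E}
    {L : ℝ≥0} (hψ : LipschitzOnWith K ψ Ω) (hg : LeftInvOn g (fun z => z + t • ψ z) Ω)
    (hgL : LipschitzOnWith L g ((fun z => z + t • ψ z) '' Ω))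
    (ht : ((fun z => z + t • ψ z) '' Ω)ᶜ.Nonempty)
    (hts : ((fun z => z + (t + s) • ψ z) '' Ω)ᶜ.Nonempty) (hs : 4 * (|s| * K * L) ≤ 1)
    {x : E} (hx : x ∈ Ω) :
    |infDist (x + (t + s) • ψ x) ((fun z => z + (t + s) • ψ z) '' Ω)ᶜ -
        infDist (x + t • ψ x) ((fun z => z + t • ψ z) '' Ω)ᶜ| ≤
      2 * (|s| * K * L) * infDist (x + t • ψ x) ((fun z => z + t • ψ z) '' Ω)ᶜ := by
  have hdiff : (fun z => z + (t + s) • ψ z - (z + t • ψ z)) = fun z => s • ψ z := by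
    funext z; module
  have hGF : LipschitzOnWith (‖s‖₊ * K) (fun z => z + (t + s) • ψ z - (z + t • ψ z)) Ω :=
    hdiff ▸ (lipschitzWith_smul s).comp_lipschitzOnWith hψ
  have hcoe : ((‖s‖₊ * K : ℝ≥0) : ℝ) = |s| * K := by push_cast; rw [Real.norm_eq_abs]
  have hsmall : 4 * (‖s‖₊ * K * L) ≤ 1 := by
    rw [← NNReal.coe_le_coe]; push_cast [hcoe]; exact hs
  simpa only [hcoe] using
    abs_infDist_compl_image_sub_le hg hgL hGF hsmall ht hts hx

end AddSmul

theorem stmt13_general {n : ℕ} (Ω : Set (EuclideanSpace ℝ (Fin n)))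
    (hΩb : Bornology.IsBounded Ω)
    (ψ : EuclideanSpace ℝ (Fin n) → EuclideanSpace ℝ (Fin n)) (K : NNReal)
    (hψ : LipschitzOnWith K ψ (closure Ω)) (p : ℝ) (hp : 1 ≤ p) (T : ℝ)
    (hbil : ∀ t : ℝ, |t| < T →
      ∃ (K₂ : NNReal) (g : EuclideanSpace ℝ (Fin n) → EuclideanSpace ℝ (Fin n)),
        LipschitzOnWith K₂ g ((fun x => x + t • ψ x) '' closure Ω) ∧
        Set.LeftInvOn g (fun x => x + t • ψ x) (closure Ω))
    (t₀ : ℝ) (ht₀ : |t₀| < T) :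
    ∃ c > (0 : ℝ), ∃ s₀ > (0 : ℝ), ∀ x ∈ Ω, ∀ s : ℝ, |s| < s₀ →
      |Metric.infDist (x + (t₀ + s) • ψ x) (frontier ((fun z => z + (t₀ + s) • ψ z) '' Ω)) ^ p -
          Metric.infDist (x + t₀ • ψ x) (frontier ((fun z => z + t₀ • ψ z) '' Ω)) ^ p|
        ≤ c * Metric.infDist (x + t₀ • ψ x) (frontier ((fun z => z + t₀ • ψ z) '' Ω)) ^ p * |s| := by
  obtain ⟨L, g, hgL, hg⟩ := hbil t₀ ht₀
  refine ⟨2 * (2 ^ p + p) * (K * L + 1), by positivity, 1 / (4 * (K * L + 1)), by positivity,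
    fun x hx s hs => ?_⟩
  rcases subsingleton_or_nontrivial (EuclideanSpace ℝ (Fin n)) with hE | hE
  · simp [(nonempty_of_mem (mem_image_of_mem _ hx)).eq_univ, Real.zero_rpow (by linarith : p ≠ 0)]
  have hfr : ∀ t : ℝ, infDist (x + t • ψ x) (frontier ((fun z => z + t • ψ z) '' Ω)) =
      infDist (x + t • ψ x) ((fun z => z + t • ψ z) '' Ω)ᶜ := fun t =>
    infDist_frontier_eq_infDist_compl (mem_image_of_mem _ hx)
  have hcompl := nonempty_compl_image_add_smul (hψ.mono subset_closure) hΩb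
  have hsmall : 4 * (|s| * K * L) ≤ 1 := by
    rw [lt_div_iff₀ (by positivity)] at hs
    nlinarith [abs_nonneg s, mul_nonneg K.coe_nonneg L.coe_nonneg]
  have hδ := abs_infDist_compl_image_add_smul_sub_le (hψ.mono subset_closure)
    (hg.mono subset_closure) (hgL.mono (image_mono subset_closure))
    (hcompl t₀) (hcompl (t₀ + s)) hsmall hx
  rw [hfr, hfr]
  set δ := infDist (x + t₀ • ψ x) ((fun z => z + t₀ • ψ z) '' Ω)ᶜ
  have hδp : 0 ≤ δ ^ p := Real.rpow_nonneg infDist_nonneg p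
  calc _ ≤ (2 ^ p + p) * (2 * (|s| * K * L)) * δ ^ p :=
        Real.abs_rpow_sub_rpow_le_of_abs_sub_le infDist_nonneg (by positivity) (by linarith) hp hδ
    _ = 2 * (2 ^ p + p) * (K * L) * δ ^ p * |s| := by ring
    _ ≤ 2 * (2 ^ p + p) * (K * L + 1) * δ ^ p * |s| := by gcongr; linarith

/-- Lemma 3.1(i): With `φ_t = id + t ψ` bi-Lipschitz on `closure Ω` for
`|t| < T`, `p ∈ [1,∞)` and `t₀` fixed, there are `c, s₀ > 0` such that for all `x ∈ Ω` and
`|s| < s₀`: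
`|d_{φ_{t₀+s}(Ω)}(φ_{t₀+s}(x))^p − d_{φ_{t₀}(Ω)}(φ_{t₀}(x))^p| ≤ c d_{φ_{t₀}(Ω)}(φ_{t₀}(x))^p |s|`. -/
theorem stmt13 {n : ℕ} (Ω : Set (EuclideanSpace ℝ (Fin n)))
    (hΩo : IsOpen Ω) (hΩb : Bornology.IsBounded Ω)
    (ψ : EuclideanSpace ℝ (Fin n) → EuclideanSpace ℝ (Fin n)) (K : NNReal)
    (hψ : LipschitzOnWith K ψ (closure Ω)) (p : ℝ) (hp : 1 ≤ p) (T : ℝ) (hT : 0 < T)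
    (hbil : ∀ t : ℝ, |t| < T →
      ∃ (K₂ : NNReal) (g : EuclideanSpace ℝ (Fin n) → EuclideanSpace ℝ (Fin n)),
        LipschitzOnWith K₂ g ((fun x => x + t • ψ x) '' closure Ω) ∧
        Set.LeftInvOn g (fun x => x + t • ψ x) (closure Ω))
    (t₀ : ℝ) (ht₀ : |t₀| < T) :
    ∃ c > (0 : ℝ), ∃ s₀ > (0 : ℝ), ∀ x ∈ Ω, ∀ s : ℝ, |s| < s₀ →
      |Metric.infDist (x + (t₀ + s) • ψ x) (frontier ((fun z => z + (t₀ + s) • ψ z) '' Ω)) ^ p -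
          Metric.infDist (x + t₀ • ψ x) (frontier ((fun z => z + t₀ • ψ z) '' Ω)) ^ p|
        ≤ c * Metric.infDist (x + t₀ • ψ x) (frontier ((fun z => z + t₀ • ψ z) '' Ω)) ^ p * |s| :=
  stmt13_general Ω hΩb ψ K hψ p hp T hbil t₀ ht₀
end

section
/- Let Ω ⊂ ℝⁿ be a bounded open set, ψ: closure(Ω) → ℝⁿ Lipschitz, and φ_t = id + tψ bi-Lipschitz for |t| < T. Suppose x ∈ Ω is such that the distance function d_{φ_{t₀}(Ω)} is differentiable at φ_{t₀}(x) (equivalently, there is a unique nearest boundary point τ(φ_{t₀}(x))). Then, writing b_s ∈ ∂Ω for a nearest-point selection with d_{φ_{t₀+s}(Ω)}(φ_{t₀+s}(x)) = |φ_{t₀+s}(x) − φ_{t₀+s}(b_s)|, one has lim_{s→0} φ_{t₀+s}(b_s) = τ_{φ_{t₀}(Ω)}(φ_{t₀}(x)); in particular lim_{s→0} b_s = φ_{t₀}^{-1}(τ_{φ_{t₀}(Ω)}(φ_{t₀}(x))). -/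
/-!
Let `φ_t z = z + t • ψ z` and `y = φ_{t₀} x`. Being injective and continuous on `closure Ω`,
`φ_t` maps `∂Ω` into `∂(φ_t Ω)`. Comparing `b_s` with the preimage `c ∈ ∂Ω` of `τ`, and moving
from time `t₀ + s` back to `t₀` at a cost `O(|s|)`, shows that `φ_{t₀}(b_s) ∈ ∂(φ_{t₀} Ω)` has
distance to `y` tending to `d(y, ∂(φ_{t₀} Ω))`. That boundary is compact with `τ` the unique
nearest point to `y`, so `φ_{t₀}(b_s) → τ`. Then `φ_{t₀+s}(b_s) = φ_{t₀}(b_s) + s • ψ(b_s)` has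
the same limit, and `b_s = φ_{t₀}⁻¹(φ_{t₀}(b_s)) → φ_{t₀}⁻¹(τ)`.
-/

open Metric Set Filter Topology

theorem IsOpen.image_frontier_subset_frontier_image {X Y : Type*} [TopologicalSpace X]
    [TopologicalSpace Y] {U : Set X} (hU : IsOpen U) {f : X → Y}
    (hf : ContinuousOn f (closure U)) (hinj : InjOn f (closure U)) :
    f '' frontier U ⊆ frontier (f '' U) := by
  rintro _ ⟨z, hz, rfl⟩
  refine ⟨hf.image_closure (mem_image_of_mem f (frontier_subset_closure hz)), fun hint => ?_⟩
  obtain ⟨w, hw, hfwz⟩ := interior_subset hint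
  have hwz : w = z := hinj (subset_closure hw) (frontier_subset_closure hz) hfwz
  exact (hU.inter_frontier_eq.subset ⟨hwz ▸ hw, hz⟩ : z ∈ (∅ : Set X))

theorem IsCompact.tendsto_nhds_of_tendsto_comp {ι X Y : Type*} [TopologicalSpace X]
    [TopologicalSpace Y] [T2Space Y] {K : Set X} (hK : IsCompact K) {f : X → Y}
    (hf : Continuous f) {a : X} (huniq : ∀ y ∈ K, f y = f a → y = a) {l : Filter ι}
    {u : ι → X} (hu : ∀ᶠ i in l, u i ∈ K) (hfu : Tendsto (f ∘ u) l (𝓝 (f a))) :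
    Tendsto u l (𝓝 a) :=
  hK.tendsto_nhds_of_unique_mapClusterPt hu fun y hy hcl =>
    huniq y hy <| eq_of_nhds_neBot <|
      Filter.NeBot.mono (hcl.continuousAt_comp hf.continuousAt) (inf_le_inf_left _ hfu)

theorem Set.LeftInvOn.tendsto_of_tendsto_comp {ι X Y : Type*} [TopologicalSpace X]
    [TopologicalSpace Y] {f : X → Y} {g : Y → X} {s : Set X} (hg : LeftInvOn g f s) {a : X}
    (hgc : ContinuousWithinAt g (f '' s) (f a)) {l : Filter ι} {u : ι → X}
    (hu : ∀ᶠ i in l, u i ∈ s) (hfu : Tendsto (f ∘ u) l (𝓝 (f a))) :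
    Tendsto u l (𝓝 (g (f a))) :=
  (hgc.tendsto.comp <| tendsto_nhdsWithin_iff.2
    ⟨hfu, hu.mono fun _ hi => mem_image_of_mem f hi⟩).congr'
    (hu.mono fun _ hi => hg hi)

section Perturbation

variable {E : Type*} [SeminormedAddCommGroup E] [NormedSpace ℝ E]

theorem dist_add_smul_add_smul_le (a c u v : E) (t t' : ℝ) :
    dist (a + t • u) (c + t • v) ≤
      dist (a + t' • u) (c + t' • v) + |t - t'| * (‖u‖ + ‖v‖) :=
  calc dist (a + t • u) (c + t • v)
      = dist ((a + t' • u) + (t - t') • u) ((c + t' • v) + (t - t') • v) := by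
        simp only [sub_smul]; congr 1 <;> abel
    _ ≤ dist (a + t' • u) (c + t' • v) + dist ((t - t') • u) ((t - t') • v) :=
        dist_add_add_le _ _ _ _
    _ ≤ _ := by
        rw [dist_smul₀, Real.norm_eq_abs]
        gcongr
        exact dist_le_norm_add_norm u v

theorem dist_add_smul_le_of_infDist_eq (ψ : E → E) {S : Set E} {x b c : E} {t s : ℝ}
    (hb : infDist (x + (t + s) • ψ x) S = dist (x + (t + s) • ψ x) (b + (t + s) • ψ b))
    (hc : c + (t + s) • ψ c ∈ S) :
    dist (x + t • ψ x) (b + t • ψ b) ≤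
      dist (x + t • ψ x) (c + t • ψ c) + |s| * (2 * ‖ψ x‖ + ‖ψ b‖ + ‖ψ c‖) := by
  have hback := dist_add_smul_add_smul_le x b (ψ x) (ψ b) t (t + s)
  have hforth := dist_add_smul_add_smul_le x c (ψ x) (ψ c) (t + s) t
  have hnear := infDist_le_dist_of_mem hc (x := x + (t + s) • ψ x)
  rw [show t - (t + s) = -s by ring, abs_neg] at hback
  rw [add_sub_cancel_left] at hforth
  linarith

theorem tendsto_dist_of_infDist_eq (ψ : E → E) {A : Set E} {M : ℝ}
    (hM : ∀ z ∈ A, ‖ψ z‖ ≤ M) {S : ℝ → Set E} {x c : E} {t : ℝ} {b : ℝ → E} (hc : c ∈ A)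
    (hcS : ∀ᶠ s in 𝓝 0, c + (t + s) • ψ c ∈ S s) (hbA : ∀ᶠ s in 𝓝 0, b s ∈ A)
    (hb : ∀ᶠ s in 𝓝 0, infDist (x + (t + s) • ψ x) (S s) =
      dist (x + (t + s) • ψ x) (b s + (t + s) • ψ (b s)))
    (hcb : ∀ᶠ s in 𝓝 0,
      dist (x + t • ψ x) (c + t • ψ c) ≤ dist (x + t • ψ x) (b s + t • ψ (b s))) :
    Tendsto (fun s => dist (x + t • ψ x) (b s + t • ψ (b s))) (𝓝 0)
      (𝓝 (dist (x + t • ψ x) (c + t • ψ c))) := by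
  set d := dist (x + t • ψ x) (c + t • ψ c)
  have hupper : Tendsto (fun s : ℝ => d + |s| * (2 * ‖ψ x‖ + 2 * M)) (𝓝 0) (𝓝 d) := by
    simpa using ((continuous_abs.tendsto (0 : ℝ)).mul_const (2 * ‖ψ x‖ + 2 * M)).const_add d
  refine tendsto_of_tendsto_of_tendsto_of_le_of_le' tendsto_const_nhds hupper hcb ?_
  filter_upwards [hcS, hbA, hb] with s hcs hbs hbs'
  calc _ ≤ d + |s| * (2 * ‖ψ x‖ + ‖ψ (b s)‖ + ‖ψ c‖) :=
        dist_add_smul_le_of_infDist_eq ψ hbs' hcs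
    _ ≤ _ := by gcongr d + |s| * ?_; linarith [hM _ hbs, hM c hc]

end Perturbation

theorem stmt14_general {n : ℕ} (Ω : Set (EuclideanSpace ℝ (Fin n)))
    (hΩo : IsOpen Ω) (hΩb : Bornology.IsBounded Ω)
    (ψ : EuclideanSpace ℝ (Fin n) → EuclideanSpace ℝ (Fin n)) (K : NNReal)
    (hψ : LipschitzOnWith K ψ (closure Ω)) (T : ℝ)
    (hbil : ∀ t : ℝ, |t| < T →
      ∃ (K₂ : NNReal) (g : EuclideanSpace ℝ (Fin n) → EuclideanSpace ℝ (Fin n)),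
        LipschitzOnWith K₂ g ((fun x => x + t • ψ x) '' closure Ω) ∧
        Set.LeftInvOn g (fun x => x + t • ψ x) (closure Ω))
    (t₀ : ℝ)
    (hfr : (fun z => z + t₀ • ψ z) '' frontier Ω = frontier ((fun z => z + t₀ • ψ z) '' Ω))
    (g₀ : EuclideanSpace ℝ (Fin n) → EuclideanSpace ℝ (Fin n)) (K₀ : NNReal)
    (hg₀ : LipschitzOnWith K₀ g₀ ((fun z => z + t₀ • ψ z) '' closure Ω))
    (hg₀i : Set.LeftInvOn g₀ (fun z => z + t₀ • ψ z) (closure Ω))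
    (x : EuclideanSpace ℝ (Fin n))
    (τ : EuclideanSpace ℝ (Fin n))
    (hτmem : τ ∈ frontier ((fun z => z + t₀ • ψ z) '' Ω))
    (hτdist : dist (x + t₀ • ψ x) τ =
      Metric.infDist (x + t₀ • ψ x) (frontier ((fun z => z + t₀ • ψ z) '' Ω)))
    (hτuniq : ∀ b' ∈ frontier ((fun z => z + t₀ • ψ z) '' Ω),
      dist (x + t₀ • ψ x) b' =
        Metric.infDist (x + t₀ • ψ x) (frontier ((fun z => z + t₀ • ψ z) '' Ω)) → b' = τ)
    (b : ℝ → EuclideanSpace ℝ (Fin n)) (s₁ : ℝ) (hs₁ : 0 < s₁) (hs₁T : s₁ ≤ T - |t₀|)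
    (hb : ∀ s : ℝ, |s| < s₁ → b s ∈ frontier Ω ∧
      Metric.infDist (x + (t₀ + s) • ψ x) (frontier ((fun z => z + (t₀ + s) • ψ z) '' Ω)) =
        dist (x + (t₀ + s) • ψ x) (b s + (t₀ + s) • ψ (b s))) :
    Tendsto (fun s : ℝ => b s + (t₀ + s) • ψ (b s)) (𝓝[≠] (0 : ℝ)) (𝓝 τ) ∧
      Tendsto b (𝓝[≠] (0 : ℝ)) (𝓝 (g₀ τ)) := by
  have hΩfc : IsCompact (frontier Ω) :=
    hΩb.isCompact_closure.of_isClosed_subset isClosed_frontier frontier_subset_closure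
  have hφc (t : ℝ) : ContinuousOn (fun z => z + t • ψ z) (closure Ω) :=
    continuousOn_id.add (hψ.continuousOn.const_smul t)
  obtain ⟨M, hM⟩ :=
    hΩfc.exists_bound_of_continuousOn (hψ.continuousOn.mono frontier_subset_closure)
  obtain ⟨c, hc, rfl⟩ : τ ∈ (fun z => z + t₀ • ψ z) '' frontier Ω := hfr ▸ hτmem
  have hs : ∀ᶠ s in 𝓝 (0 : ℝ), |s| < s₁ := by simpa using eventually_abs_sub_lt 0 hs₁
  have hbΩ : ∀ᶠ s in 𝓝 (0 : ℝ), b s ∈ frontier Ω := hs.mono fun s h => (hb s h).1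
  have hbF : ∀ᶠ s in 𝓝 (0 : ℝ),
      b s + t₀ • ψ (b s) ∈ frontier ((fun z => z + t₀ • ψ z) '' Ω) :=
    hbΩ.mono fun s h => hfr ▸ mem_image_of_mem _ h
  have hcS : ∀ᶠ s in 𝓝 (0 : ℝ),
      c + (t₀ + s) • ψ c ∈ frontier ((fun z => z + (t₀ + s) • ψ z) '' Ω) := by
    filter_upwards [hs] with s hs
    obtain ⟨-, g, -, hg⟩ := hbil (t₀ + s) ((abs_add_le t₀ s).trans_lt (by linarith))
    exact hΩo.image_frontier_subset_frontier_image (hφc _) hg.injOn ⟨c, hc, rfl⟩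
  have hdist := tendsto_dist_of_infDist_eq ψ hM hc hcS hbΩ (hs.mono fun s h => (hb s h).2)
    (hbF.mono fun s h => hτdist ▸ infDist_le_dist_of_mem h)
  have hFc : IsCompact (frontier ((fun z => z + t₀ • ψ z) '' Ω)) :=
    hfr ▸ hΩfc.image_of_continuousOn ((hφc t₀).mono frontier_subset_closure)
  have hP : Tendsto (fun s => b s + t₀ • ψ (b s)) (𝓝 0) (𝓝 (c + t₀ • ψ c)) :=
    hFc.tendsto_nhds_of_tendsto_comp (continuous_const.dist continuous_id)
      (fun y hy hyd => hτuniq y hy (hyd.trans hτdist)) hbF hdist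
  have hQ : Tendsto (fun s : ℝ => s • ψ (b s)) (𝓝 0) (𝓝 0) :=
    tendsto_id.zero_smul_isBoundedUnder_le
      (isBoundedUnder_of_eventually_le (hbΩ.mono fun s h => hM _ h))
  refine ⟨?_, Tendsto.mono_left ?_ nhdsWithin_le_nhds⟩
  · simpa only [add_zero, add_smul, add_assoc] using (hP.add hQ).mono_left nhdsWithin_le_nhds
  · exact hg₀i.tendsto_of_tendsto_comp
      (hg₀.continuousOn _ (mem_image_of_mem _ (frontier_subset_closure hc)))
      (hbΩ.mono fun s h => frontier_subset_closure h) hP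

/-- With `φ_t = id + t ψ` bi-Lipschitz, if the distance function of
`φ_{t₀}(Ω)` has a unique nearest boundary point `τ` at `y = φ_{t₀}(x)` (equivalently it is
differentiable there), and `b_s ∈ ∂Ω` is any nearest-point selection for the perturbed
domains, then `φ_{t₀+s}(b_s) → τ` and `b_s → φ_{t₀}⁻¹(τ)` as `s → 0`. -/
theorem stmt14 {n : ℕ} (Ω : Set (EuclideanSpace ℝ (Fin n)))
    (hΩo : IsOpen Ω) (hΩb : Bornology.IsBounded Ω)
    (ψ : EuclideanSpace ℝ (Fin n) → EuclideanSpace ℝ (Fin n)) (K : NNReal)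
    (hψ : LipschitzOnWith K ψ (closure Ω)) (T : ℝ) (hT : 0 < T)
    (hbil : ∀ t : ℝ, |t| < T →
      ∃ (K₂ : NNReal) (g : EuclideanSpace ℝ (Fin n) → EuclideanSpace ℝ (Fin n)),
        LipschitzOnWith K₂ g ((fun x => x + t • ψ x) '' closure Ω) ∧
        Set.LeftInvOn g (fun x => x + t • ψ x) (closure Ω))
    (t₀ : ℝ) (ht₀ : |t₀| < T)
    (hfr : (fun z => z + t₀ • ψ z) '' frontier Ω = frontier ((fun z => z + t₀ • ψ z) '' Ω))
    (g₀ : EuclideanSpace ℝ (Fin n) → EuclideanSpace ℝ (Fin n)) (K₀ : NNReal)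
    (hg₀ : LipschitzOnWith K₀ g₀ ((fun z => z + t₀ • ψ z) '' closure Ω))
    (hg₀i : Set.LeftInvOn g₀ (fun z => z + t₀ • ψ z) (closure Ω))
    (x : EuclideanSpace ℝ (Fin n)) (hx : x ∈ Ω)
    (τ : EuclideanSpace ℝ (Fin n))
    (hτmem : τ ∈ frontier ((fun z => z + t₀ • ψ z) '' Ω))
    (hτdist : dist (x + t₀ • ψ x) τ =
      Metric.infDist (x + t₀ • ψ x) (frontier ((fun z => z + t₀ • ψ z) '' Ω)))
    (hτuniq : ∀ b' ∈ frontier ((fun z => z + t₀ • ψ z) '' Ω),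
      dist (x + t₀ • ψ x) b' =
        Metric.infDist (x + t₀ • ψ x) (frontier ((fun z => z + t₀ • ψ z) '' Ω)) → b' = τ)
    (b : ℝ → EuclideanSpace ℝ (Fin n)) (s₁ : ℝ) (hs₁ : 0 < s₁) (hs₁T : s₁ ≤ T - |t₀|)
    (hb : ∀ s : ℝ, |s| < s₁ → b s ∈ frontier Ω ∧
      Metric.infDist (x + (t₀ + s) • ψ x) (frontier ((fun z => z + (t₀ + s) • ψ z) '' Ω)) =
        dist (x + (t₀ + s) • ψ x) (b s + (t₀ + s) • ψ (b s))) :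
    Tendsto (fun s : ℝ => b s + (t₀ + s) • ψ (b s)) (𝓝[≠] (0 : ℝ)) (𝓝 τ) ∧
      Tendsto b (𝓝[≠] (0 : ℝ)) (𝓝 (g₀ τ)) :=
  stmt14_general Ω hΩo hΩb ψ K hψ T hbil t₀ hfr g₀ K₀ hg₀ hg₀i x τ hτmem hτdist hτuniq b s₁ hs₁ hs₁T
    hb
end

section
/- Let Ω ⊂ ℝⁿ be a bounded open set, ψ: closure(Ω) → ℝⁿ Lipschitz, p ∈ [1, ∞), φ_t = id + tψ bi-Lipschitz for |t| < T. If x ∈ Ω and d_{φ_{t₀}(Ω)} is differentiable at φ_{t₀}(x), then t ↦ d_{φ_t(Ω)}(φ_t(x))^p is differentiable at t₀ with derivative p · d_{φ_{t₀}(Ω)}(φ_{t₀}(x))^p · V(φ_{t₀}(x)), where V(y) = d_{φ_{t₀}(Ω)}(y)^{-1} · ∇d_{φ_{t₀}(Ω)}(y) · (ψ(φ_{t₀}^{-1}(y)) − ψ(φ_{t₀}^{-1}(τ(y)))) and τ(y) is the nearest boundary point of ∂(φ_{t₀}(Ω)) to y. -/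
open Metric Set Filter Topology RealInnerProductSpace

/-!
Near `t₀`, `φ_t = φ_{t₀} + (t - t₀) θ ∘ φ_{t₀}` on `closure Ω`, where `θ` is a global Lipschitz
extension of `ψ ∘ φ_{t₀}⁻¹`; a small Lipschitz perturbation of the identity is a homeomorphism,
so `∂(φ_t Ω) = φ_t(∂Ω)`. Hence the distance is `D(t) = min_{b ∈ ∂Ω} ‖(x - b) + t (ψ x - ψ b)‖`,
a minimum over a compact set of norms of affine functions of `t`, and Danskin's argument applies:
`D` lies below the differentiable curve of the unique minimiser `b₀ = φ_{t₀}⁻¹(τ)`, and above the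
tangent lines at `t₀` of the curves of the minimisers `β_t`, whose slopes tend to the same value
because `β_t → b₀`. The chain rule then handles the `p`-th power.
-/

theorem eventually_abs_sub_mul_lt (t₀ M : ℝ) {ε : ℝ} (hε : 0 < ε) :
    ∀ᶠ t in 𝓝 t₀, |t - t₀| * M < ε := by
  have hcont : Continuous fun t : ℝ => |t - t₀| * M := by fun_prop
  exact hcont.continuousAt.eventually_lt continuousAt_const (by simpa using hε)

theorem hasDerivAt_of_squeeze {f F m : ℝ → ℝ} {t₀ L : ℝ} (hF : HasDerivAt F L t₀)
    (hm : Tendsto m (𝓝 t₀) (𝓝 L)) (hup : ∀ t, f t - f t₀ ≤ F t - F t₀)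
    (hlow : ∀ t, (t - t₀) * m t ≤ f t - f t₀) : HasDerivAt f L t₀ := by
  have hFs := hasDerivAt_iff_tendsto_slope.1 hF
  rw [hasDerivAt_iff_tendsto_slope, ← nhdsLT_sup_nhdsGT] at *
  rw [tendsto_sup] at hFs ⊢
  constructor
  · refine tendsto_of_tendsto_of_tendsto_of_le_of_le' hFs.1 (hm.mono_left nhdsWithin_le_nhds) ?_ ?_
    all_goals filter_upwards [self_mem_nhdsWithin] with t (ht : t < t₀)
    · rw [slope_def_field, slope_def_field]
      exact div_le_div_of_nonpos_of_le (by linarith) (hup t)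
    · rw [slope_def_field, div_le_iff_of_neg (by linarith)]
      linarith [hlow t]
  · refine tendsto_of_tendsto_of_tendsto_of_le_of_le' (hm.mono_left nhdsWithin_le_nhds) hFs.2 ?_ ?_
    all_goals filter_upwards [self_mem_nhdsWithin] with t (ht : t₀ < t)
    · rw [slope_def_field, le_div_iff₀ (by linarith)]
      linarith [hlow t]
    · rw [slope_def_field, slope_def_field]
      exact div_le_div_of_nonneg_right (hup t) (by linarith)

theorem tendsto_of_isMinOn_of_tendstoUniformlyOn {ι X : Type*} [TopologicalSpace X]
    {l : Filter ι} {F : ι → X → ℝ} {f : X → ℝ} {S : Set X} {b₀ : X} {β : ι → X}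
    (hS : IsCompact S) (hf : ContinuousOn f S) (hF : TendstoUniformlyOn F f l S)
    (hb₀S : b₀ ∈ S) (hb₀ : ∀ b ∈ S, b ≠ b₀ → f b₀ < f b)
    (hβS : ∀ i, β i ∈ S) (hβ : ∀ i, IsMinOn (F i) S (β i)) : Tendsto β l (𝓝 b₀) := by
  rw [_root_.tendsto_nhds]
  intro V hV hb₀V
  rcases (S \ V).eq_empty_or_nonempty with hempty | hne
  · filter_upwards with i
    by_contra hβV
    exact hempty.subset ⟨hβS i, hβV⟩
  obtain ⟨z, hz, hzmin⟩ := (hS.diff hV).exists_isMinOn hne (hf.mono sdiff_subset)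
  have hgap : 0 < f z - f b₀ := sub_pos.2 (hb₀ z hz.1 fun h => hz.2 (h ▸ hb₀V))
  filter_upwards [Metric.tendstoUniformlyOn_iff.1 hF _ (half_pos hgap)] with i hi
  by_contra hβV
  have hβ' := hi (β i) (hβS i)
  have hb₀' := hi b₀ hb₀S
  rw [Real.dist_eq, abs_lt] at hβ' hb₀'
  have hβmin : F i (β i) ≤ F i b₀ := isMinOn_iff.1 (hβ i) b₀ hb₀S
  have hzβ : f z ≤ f (β i) := isMinOn_iff.1 hzmin (β i) ⟨hβS i, hβV⟩
  linarith

theorem Metric.infDist_image_eq_of_isMinOn {α β : Type*} [PseudoMetricSpace β] {f : α → β}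
    {S : Set α} {y : β} {b : α} (hb : b ∈ S) (hmin : IsMinOn (fun b => dist y (f b)) S b) :
    infDist y (f '' S) = dist y (f b) :=
  le_antisymm (infDist_le_dist_of_mem (mem_image_of_mem f hb))
    ((le_infDist ⟨_, mem_image_of_mem f hb⟩).2
      (forall_mem_image.2 fun _ hb' => isMinOn_iff.1 hmin _ hb'))

section NormedSpace
variable {E : Type*} [NormedAddCommGroup E] [NormedSpace ℝ E]

theorem dist_add_smul_add_smul (ψ : E → E) (t : ℝ) (x b : E) :
    dist (x + t • ψ x) (b + t • ψ b) = ‖(x - b) + t • (ψ x - ψ b)‖ := by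
  rw [dist_eq_norm, smul_sub]
  congr 1
  abel

theorem tendstoUniformlyOn_norm_add_smul {X : Type*} {u w : X → E} {S : Set X} {M : ℝ}
    (hw : ∀ b ∈ S, ‖w b‖ ≤ M) (t₀ : ℝ) :
    TendstoUniformlyOn (fun t b => ‖u b + t • w b‖) (fun b => ‖u b + t₀ • w b‖) (𝓝 t₀) S := by
  rw [Metric.tendstoUniformlyOn_iff]
  intro ε hε
  filter_upwards [eventually_abs_sub_mul_lt t₀ M hε] with t ht b hb
  calc dist ‖u b + t₀ • w b‖ ‖u b + t • w b‖ ≤ ‖(t₀ - t) • w b‖ := by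
        rw [Real.dist_eq, sub_smul]
        exact (abs_norm_sub_norm_le _ _).trans_eq (by congr 1; abel)
    _ ≤ |t - t₀| * M := by
        rw [norm_smul, Real.norm_eq_abs, abs_sub_comm]
        exact mul_le_mul_of_nonneg_left (hw b hb) (abs_nonneg _)
    _ < ε := ht

theorem LipschitzWith.isHomeomorph_add_smul [CompleteSpace E] {θ : E → E} {C : NNReal}
    (hθ : LipschitzWith C θ) {s : ℝ} (hs : |s| * C < 1) : IsHomeomorph fun z => z + s • θ z := by
  have happrox : ApproximatesLinearOn (fun z => z + s • θ z)
      ((ContinuousLinearEquiv.refl ℝ E : E ≃L[ℝ] E) : E →L[ℝ] E) univ (‖s‖₊ * C) := by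
    rw [ApproximatesLinearOn.approximatesLinearOn_iff_lipschitzOnWith]
    have hdiff : (fun z => z + s • θ z) -
        ⇑((ContinuousLinearEquiv.refl ℝ E : E ≃L[ℝ] E) : E →L[ℝ] E) = fun z => s • θ z := by
      ext z
      simp
    rw [hdiff]
    exact ((lipschitzWith_smul s).comp hθ).lipschitzOnWith
  have hc : Subsingleton E ∨
      ‖s‖₊ * C < ‖((ContinuousLinearEquiv.refl ℝ E).symm : E →L[ℝ] E)‖₊⁻¹ := by
    rcases subsingleton_or_nontrivial E with h | h
    · exact Or.inl h
    · right
      rw [ContinuousLinearEquiv.refl_symm, ContinuousLinearEquiv.coe_refl,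
        ContinuousLinearMap.nnnorm_id, inv_one, ← NNReal.coe_lt_coe]
      simpa using hs
  exact (happrox.toHomeomorph _ hc).isHomeomorph

theorem eventually_frontier_image_add_smul [FiniteDimensional ℝ E] {Ω : Set E} {ψ g₀ : E → E}
    {K K₀ : NNReal} (hψ : LipschitzOnWith K ψ (closure Ω)) {t₀ : ℝ}
    (hg₀ : LipschitzOnWith K₀ g₀ ((fun z => z + t₀ • ψ z) '' closure Ω))
    (hg₀i : LeftInvOn g₀ (fun z => z + t₀ • ψ z) (closure Ω))
    (hfr : (fun z => z + t₀ • ψ z) '' frontier Ω = frontier ((fun z => z + t₀ • ψ z) '' Ω)) :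
    ∀ᶠ t in 𝓝 t₀,
      frontier ((fun z => z + t • ψ z) '' Ω) = (fun z => z + t • ψ z) '' frontier Ω := by
  obtain ⟨θ, hθ, hθeq⟩ :=
    (hψ.comp hg₀ (hg₀i.mapsTo (surjOn_image _ _))).extend_finite_dimension
  have hφ : ∀ t, ∀ z ∈ closure Ω,
      z + t • ψ z = (fun w => w + (t - t₀) • θ w) (z + t₀ • ψ z) := by
    intro t z hz
    dsimp only
    rw [← hθeq (mem_image_of_mem _ hz), Function.comp_apply, hg₀i hz, add_assoc, ← add_smul,
      add_sub_cancel]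
  have himage : ∀ t, ∀ A ⊆ closure Ω, (fun z => z + t • ψ z) '' A =
      (fun w => w + (t - t₀) • θ w) '' ((fun z => z + t₀ • ψ z) '' A) := fun t A hA => by
    rw [image_image]
    exact image_congr fun z hz => hφ t z (hA hz)
  filter_upwards [eventually_abs_sub_mul_lt t₀ _ one_pos] with t ht
  rw [himage t Ω subset_closure, himage t _ frontier_subset_closure, hfr,
    (hθ.isHomeomorph_add_smul ht).image_frontier]

end NormedSpace

section InnerProductSpace
variable {E : Type*} [NormedAddCommGroup E] [InnerProductSpace ℝ E]

theorem HasDerivAt.norm {f : ℝ → E} {f' : E} {t : ℝ} (hf : HasDerivAt f f' t) (h0 : f t ≠ 0) :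
    HasDerivAt (fun s => ‖f s‖) (⟪f t, f'⟫ / ‖f t‖) t := by
  have hsq := hf.norm_sq.sqrt (by positivity)
  simp only [Real.sqrt_sq (norm_nonneg _)] at hsq
  convert hsq using 1
  field_simp

/-- At `v = 0` the junk value `⟪v, w⟫ / 0 = 0` keeps this true. -/
theorem norm_add_mul_inner_div_norm_le (v w : E) (s : ℝ) :
    ‖v‖ + s * (⟪v, w⟫ / ‖v‖) ≤ ‖v + s • w‖ := by
  rcases eq_or_ne v 0 with rfl | hv
  · simp
  have hv' : 0 < ‖v‖ := norm_pos_iff.2 hv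
  have hCS := real_inner_le_norm v (v + s • w)
  rw [inner_add_right, real_inner_smul_right, real_inner_self_eq_norm_mul_norm] at hCS
  refine le_of_mul_le_mul_left ?_ hv'
  calc ‖v‖ * (‖v‖ + s * (⟪v, w⟫ / ‖v‖)) = ‖v‖ * ‖v‖ + s * ⟪v, w⟫ := by field_simp
    _ ≤ ‖v‖ * ‖v + s • w‖ := hCS

theorem hasDerivAt_norm_add_smul_of_isMinOn {X : Type*} [TopologicalSpace X] {S : Set X}
    (hS : IsCompact S) {u w : X → E} (hu : ContinuousOn u S) (hw : ContinuousOn w S) {t₀ : ℝ}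
    {b₀ : X} (hb₀S : b₀ ∈ S)
    (hb₀ : ∀ b ∈ S, b ≠ b₀ → ‖u b₀ + t₀ • w b₀‖ < ‖u b + t₀ • w b‖)
    (hv₀ : u b₀ + t₀ • w b₀ ≠ 0) {β : ℝ → X} (hβS : ∀ t, β t ∈ S)
    (hβ : ∀ t, IsMinOn (fun b => ‖u b + t • w b‖) S (β t)) :
    HasDerivAt (fun t => ‖u (β t) + t • w (β t)‖)
      (⟪u b₀ + t₀ • w b₀, w b₀⟫ / ‖u b₀ + t₀ • w b₀‖) t₀ := by
  set v : X → E := fun b => u b + t₀ • w b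
  set m : X → ℝ := fun b => ⟪v b, w b⟫ / ‖v b‖
  have hβ₀ : β t₀ = b₀ := by
    by_contra hne
    exact (isMinOn_iff.1 (hβ t₀) b₀ hb₀S).not_gt (hb₀ _ (hβS t₀) hne)
  have hb₀min : ∀ b ∈ S, ‖v b₀‖ ≤ ‖v b‖ := fun b hb => hβ₀ ▸ isMinOn_iff.1 (hβ t₀) b hb
  obtain ⟨M, hM⟩ := hS.exists_bound_of_continuousOn hw
  have hβlim : Tendsto β (𝓝 t₀) (𝓝[S] b₀) :=
    tendsto_nhdsWithin_iff.2 ⟨tendsto_of_isMinOn_of_tendstoUniformlyOn hS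
      (hu.add (hw.const_smul t₀)).norm (tendstoUniformlyOn_norm_add_smul hM t₀) hb₀S hb₀ hβS hβ,
      Eventually.of_forall hβS⟩
  have hvcont : ContinuousWithinAt v S b₀ := (hu.add (hw.const_smul t₀)) b₀ hb₀S
  have hmcont : ContinuousWithinAt m S b₀ :=
    (hvcont.inner (hw b₀ hb₀S)).div hvcont.norm (norm_ne_zero_iff.2 hv₀)
  refine hasDerivAt_of_squeeze (m := m ∘ β) (F := fun t => ‖u b₀ + t • w b₀‖) ?_
    (hmcont.tendsto.comp hβlim) (fun t => ?_) (fun t => ?_)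
  · exact (((hasDerivAt_id t₀).smul_const (w b₀)).const_add (u b₀)).norm hv₀
      |>.congr_deriv (by simp)
  · simp only [hβ₀]
    linarith [isMinOn_iff.1 (hβ t) b₀ hb₀S]
  · have hsplit : u (β t) + t • w (β t) = v (β t) + (t - t₀) • w (β t) := by
      simp only [v, sub_smul]; abel
    simp only [hβ₀, Function.comp, hsplit]
    linarith [norm_add_mul_inner_div_norm_le (v (β t)) (w (β t)) (t - t₀), hb₀min _ (hβS t)]

theorem hasDerivAt_infDist_image_add_smul {B : Set E} (hB : IsCompact B) {ψ : E → E}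
    (hψ : ContinuousOn ψ B) (x : E) {t₀ : ℝ} {b₀ : E} (hb₀B : b₀ ∈ B)
    (hb₀ : ∀ b ∈ B, b ≠ b₀ →
      dist (x + t₀ • ψ x) (b₀ + t₀ • ψ b₀) < dist (x + t₀ • ψ x) (b + t₀ • ψ b))
    (hxb₀ : x + t₀ • ψ x ≠ b₀ + t₀ • ψ b₀) :
    HasDerivAt (fun t => infDist (x + t • ψ x) ((fun z => z + t • ψ z) '' B))
      (⟪x + t₀ • ψ x - (b₀ + t₀ • ψ b₀), ψ x - ψ b₀⟫ / dist (x + t₀ • ψ x) (b₀ + t₀ • ψ b₀))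
      t₀ := by
  simp only [dist_add_smul_add_smul] at hb₀ ⊢
  have hminex : ∀ t : ℝ, ∃ b ∈ B, IsMinOn (fun b => ‖(x - b) + t • (ψ x - ψ b)‖) B b :=
    fun t => hB.exists_isMinOn ⟨b₀, hb₀B⟩ (by fun_prop)
  choose β hβB hβ using hminex
  have hv₀ : (x - b₀) + t₀ • (ψ x - ψ b₀) ≠ 0 := by
    rwa [← norm_ne_zero_iff, ← dist_add_smul_add_smul, dist_ne_zero]
  have hy₀ : x + t₀ • ψ x - (b₀ + t₀ • ψ b₀) = (x - b₀) + t₀ • (ψ x - ψ b₀) := by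
    rw [smul_sub]; abel
  rw [hy₀]
  refine (hasDerivAt_norm_add_smul_of_isMinOn hB (u := fun b => x - b) (w := fun b => ψ x - ψ b)
    (by fun_prop) (by fun_prop) hb₀B hb₀ hv₀ hβB hβ).congr_of_eventuallyEq
      (Eventually.of_forall fun t => ?_)
  dsimp only
  rw [infDist_image_eq_of_isMinOn (hβB t), dist_add_smul_add_smul]
  simpa only [dist_add_smul_add_smul] using hβ t

end InnerProductSpace

theorem stmt15_general {n : ℕ} (Ω : Set (EuclideanSpace ℝ (Fin n)))
    (hΩo : IsOpen Ω) (hΩb : Bornology.IsBounded Ω)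
    (ψ : EuclideanSpace ℝ (Fin n) → EuclideanSpace ℝ (Fin n)) (K : NNReal)
    (hψ : LipschitzOnWith K ψ (closure Ω)) (p : ℝ)
    (t₀ : ℝ)
    (hfr : (fun z => z + t₀ • ψ z) '' frontier Ω = frontier ((fun z => z + t₀ • ψ z) '' Ω))
    (g₀ : EuclideanSpace ℝ (Fin n) → EuclideanSpace ℝ (Fin n)) (K₀ : NNReal)
    (hg₀ : LipschitzOnWith K₀ g₀ ((fun z => z + t₀ • ψ z) '' closure Ω))
    (hg₀i : Set.LeftInvOn g₀ (fun z => z + t₀ • ψ z) (closure Ω))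
    (x : EuclideanSpace ℝ (Fin n)) (hx : x ∈ Ω)
    (τ : EuclideanSpace ℝ (Fin n))
    (hτmem : τ ∈ frontier ((fun z => z + t₀ • ψ z) '' Ω))
    (hτdist : dist (x + t₀ • ψ x) τ =
      Metric.infDist (x + t₀ • ψ x) (frontier ((fun z => z + t₀ • ψ z) '' Ω)))
    (hτuniq : ∀ b' ∈ frontier ((fun z => z + t₀ • ψ z) '' Ω),
      dist (x + t₀ • ψ x) b' =
        Metric.infDist (x + t₀ • ψ x) (frontier ((fun z => z + t₀ • ψ z) '' Ω)) → b' = τ) :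
    HasDerivAt
      (fun t : ℝ =>
        Metric.infDist (x + t • ψ x) (frontier ((fun z => z + t • ψ z) '' Ω)) ^ p)
      (p * Metric.infDist (x + t₀ • ψ x) (frontier ((fun z => z + t₀ • ψ z) '' Ω)) ^ p *
        ((Metric.infDist (x + t₀ • ψ x) (frontier ((fun z => z + t₀ • ψ z) '' Ω)))⁻¹ *
          ⟪(Metric.infDist (x + t₀ • ψ x) (frontier ((fun z => z + t₀ • ψ z) '' Ω)))⁻¹ •
              ((x + t₀ • ψ x) - τ),
            ψ x - ψ (g₀ τ)⟫))
      t₀ := by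
  have hinj : InjOn (fun z => z + t₀ • ψ z) (closure Ω) := hg₀i.injOn
  obtain ⟨b₀, hb₀B, rfl⟩ : τ ∈ (fun z => z + t₀ • ψ z) '' frontier Ω := hfr ▸ hτmem
  beta_reduce at hτdist hτuniq ⊢
  have hb₀ : ∀ b ∈ frontier Ω, b ≠ b₀ →
      dist (x + t₀ • ψ x) (b₀ + t₀ • ψ b₀) < dist (x + t₀ • ψ x) (b + t₀ • ψ b) := by
    intro b hb hne
    have hmem : b + t₀ • ψ b ∈ frontier ((fun z => z + t₀ • ψ z) '' Ω) :=
      hfr ▸ mem_image_of_mem _ hb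
    rw [hτdist]
    exact (infDist_le_dist_of_mem hmem).lt_of_ne fun h => hne (hinj (frontier_subset_closure hb)
      (frontier_subset_closure hb₀B) (hτuniq _ hmem h.symm))
  have hxb₀ : x + t₀ • ψ x ≠ b₀ + t₀ • ψ b₀ := fun h => by
    have hx_eq : x = b₀ := hinj (subset_closure hx) (frontier_subset_closure hb₀B) h
    exact (hΩo.frontier_eq ▸ hb₀B).2 (hx_eq ▸ hx)
  have hD := (hasDerivAt_infDist_image_add_smul
    (hΩb.isCompact_closure.of_isClosed_subset isClosed_frontier frontier_subset_closure)
    (hψ.continuousOn.mono frontier_subset_closure) x hb₀B hb₀ hxb₀).congr_of_eventuallyEq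
      (eventually_frontier_image_add_smul hψ hg₀ hg₀i hfr |>.mono fun t ht => congrArg _ ht)
  convert hD.rpow_const (p := p) (Or.inl (hτdist ▸ dist_ne_zero.2 hxb₀)) using 1
  rw [← hτdist, hg₀i (frontier_subset_closure hb₀B), real_inner_smul_left,
    Real.rpow_sub_one (dist_ne_zero.2 hxb₀)]
  field_simp

/-- Lemma 3.1(ii): With `φ_t = id + t ψ` bi-Lipschitz, if the distance
function of `φ_{t₀}(Ω)` has a unique nearest boundary point `τ` at `y = φ_{t₀}(x)`
(equivalently it is differentiable there, with `∇d(y) = (y - τ)/d(y)`), then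
`t ↦ d_{φ_t(Ω)}(φ_t(x))^p` is differentiable at `t₀` with derivative
`p d(y)^p V(y)`, where `V(y) = d(y)⁻¹ ⟪∇d(y), ψ(φ_{t₀}⁻¹(y)) − ψ(φ_{t₀}⁻¹(τ))⟫`. -/
theorem stmt15 {n : ℕ} (Ω : Set (EuclideanSpace ℝ (Fin n)))
    (hΩo : IsOpen Ω) (hΩb : Bornology.IsBounded Ω)
    (ψ : EuclideanSpace ℝ (Fin n) → EuclideanSpace ℝ (Fin n)) (K : NNReal)
    (hψ : LipschitzOnWith K ψ (closure Ω)) (p : ℝ) (hp : 1 ≤ p) (T : ℝ) (hT : 0 < T)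
    (hbil : ∀ t : ℝ, |t| < T →
      ∃ (K₂ : NNReal) (g : EuclideanSpace ℝ (Fin n) → EuclideanSpace ℝ (Fin n)),
        LipschitzOnWith K₂ g ((fun x => x + t • ψ x) '' closure Ω) ∧
        Set.LeftInvOn g (fun x => x + t • ψ x) (closure Ω))
    (t₀ : ℝ) (ht₀ : |t₀| < T)
    (hfr : (fun z => z + t₀ • ψ z) '' frontier Ω = frontier ((fun z => z + t₀ • ψ z) '' Ω))
    (g₀ : EuclideanSpace ℝ (Fin n) → EuclideanSpace ℝ (Fin n)) (K₀ : NNReal)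
    (hg₀ : LipschitzOnWith K₀ g₀ ((fun z => z + t₀ • ψ z) '' closure Ω))
    (hg₀i : Set.LeftInvOn g₀ (fun z => z + t₀ • ψ z) (closure Ω))
    (x : EuclideanSpace ℝ (Fin n)) (hx : x ∈ Ω)
    (τ : EuclideanSpace ℝ (Fin n))
    (hτmem : τ ∈ frontier ((fun z => z + t₀ • ψ z) '' Ω))
    (hτdist : dist (x + t₀ • ψ x) τ =
      Metric.infDist (x + t₀ • ψ x) (frontier ((fun z => z + t₀ • ψ z) '' Ω)))
    (hτuniq : ∀ b' ∈ frontier ((fun z => z + t₀ • ψ z) '' Ω),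
      dist (x + t₀ • ψ x) b' =
        Metric.infDist (x + t₀ • ψ x) (frontier ((fun z => z + t₀ • ψ z) '' Ω)) → b' = τ) :
    HasDerivAt
      (fun t : ℝ =>
        Metric.infDist (x + t • ψ x) (frontier ((fun z => z + t • ψ z) '' Ω)) ^ p)
      (p * Metric.infDist (x + t₀ • ψ x) (frontier ((fun z => z + t₀ • ψ z) '' Ω)) ^ p *
        ((Metric.infDist (x + t₀ • ψ x) (frontier ((fun z => z + t₀ • ψ z) '' Ω)))⁻¹ *
          ⟪(Metric.infDist (x + t₀ • ψ x) (frontier ((fun z => z + t₀ • ψ z) '' Ω)))⁻¹ •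
              ((x + t₀ • ψ x) - τ),
            ψ x - ψ (g₀ τ)⟫))
      t₀ :=
  stmt15_general Ω hΩo hΩb ψ K hψ p t₀ hfr g₀ K₀ hg₀ hg₀i x hx τ hτmem hτdist hτuniq
end
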